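/- arXiv:math/0209343 — 4 statements merged into one kernel-verified Lean document; each statement's English description precedes it below -/
import Mathlib

section
/- Half-plane capacity is additive under the semigroup product of hulls: if A, A' are bounded hulls with 0 ∉ A, 0 ∉ A', and A·A' is defined by Φ_{A·A'} = Φ_A ∘ Φ_{A'}, then a(A·A') = a(A) + a(A'). -/
open Complex Filter Set Topology Metric

noncomputable section

/-- The open upper half-plane. -/
def UHP : Set ℂ := {z | 0 < z.im}

/-- The filter of `z → ∞` within a set `s ⊆ ℂ`. -/
def atInfWithin (s : Set ℂ) : Filter ℂ :=
  (Filter.comap (fun z : ℂ => ‖z‖) Filter.atTop) ⊓ 𝓟 s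

lemma isOpen_UHP : IsOpen UHP := isOpen_lt continuous_const Complex.continuous_im

lemma atInfWithin_mono {s t : Set ℂ} (h : s ⊆ t) : atInfWithin s ≤ atInfWithin t :=
  inf_le_inf_left _ (principal_mono.2 h)

lemma eventually_mem_atInfWithin (s : Set ℂ) : ∀ᶠ z in atInfWithin s, z ∈ s :=
  Filter.mem_inf_of_right (Filter.mem_principal_self s)

lemma tendsto_abs_atInfWithin (s : Set ℂ) :
    Tendsto (fun z => norm z) (atInfWithin s) atTop :=
  tendsto_comap.mono_left inf_le_left

lemma eventually_abs_ge (s : Set ℂ) (R : ℝ) :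
    ∀ᶠ z in atInfWithin s, R ≤ norm z :=
  (tendsto_abs_atInfWithin s).eventually_ge_atTop R

lemma eventually_ne_zero_atInfWithin (s : Set ℂ) :
    ∀ᶠ z in atInfWithin s, z ≠ 0 := by
  filter_upwards [eventually_abs_ge s 1] with z hz
  intro h
  simp [h] at hz
  linarith

lemma tendsto_inv_atInfWithin (s : Set ℂ) :
    Tendsto (fun z : ℂ => z⁻¹) (atInfWithin s) (𝓝 0) := by
  rw [tendsto_zero_iff_norm_tendsto_zero]
  have : Tendsto (fun z : ℂ => (norm z)⁻¹) (atInfWithin s) (𝓝 0) :=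
    (tendsto_abs_atInfWithin s).inv_tendsto_atTop
  simpa using this

lemma atInfWithin_neBot {s : Set ℂ} (h : ∀ R : ℝ, ∃ z ∈ s, R ≤ norm z) :
    (atInfWithin s).NeBot := by
  rw [atInfWithin, Filter.inf_principal_neBot_iff]
  intro U hU
  rcases Filter.mem_comap.1 hU with ⟨t, ht, hsub⟩
  rcases Filter.mem_atTop_sets.1 ht with ⟨R, hR⟩
  rcases h R with ⟨z, hz, hz'⟩
  exact ⟨z, hsub (hR _ hz'), hz⟩

lemma unbounded_UHP_diff {B : Set ℂ} (hB : Bornology.IsBounded B) :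
    ∀ R : ℝ, ∃ z ∈ UHP \ B, R ≤ norm z := by
  intro R
  obtain ⟨C, hC⟩ := hB.exists_norm_le
  set M : ℝ := max R (max C 0) + 1 with hM
  have hM0 : 0 < M := by
    have : (0:ℝ) ≤ max R (max C 0) := le_trans (le_max_right C 0) (le_max_right R _)
    linarith
  have habs : norm (M * Complex.I) = M := by
    simp [abs_of_pos hM0]
  refine ⟨M * Complex.I, ⟨?_, ?_⟩, ?_⟩
  · simp [UHP, hM0]
  · intro hmem
    have h1 : ‖(M : ℂ) * Complex.I‖ ≤ C := hC _ hmem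
    rw [habs] at h1
    have : C ≤ max R (max C 0) := le_trans (le_max_left C 0) (le_max_right R _)
    linarith
  · rw [habs]
    have : R ≤ max R (max C 0) := le_max_left _ _
    linarith

section maps
variable {s t : Set ℂ} {g : ℂ → ℂ}

lemma tendsto_div_one_of_hydro (h1 : Tendsto (fun z => g z - z) (atInfWithin s) (𝓝 0)) :
    Tendsto (fun z => g z / z) (atInfWithin s) (𝓝 1) := by
  have h2 : Tendsto (fun z => (g z - z) * z⁻¹ + 1) (atInfWithin s) (𝓝 1) := by
    have := (h1.mul (tendsto_inv_atInfWithin s)).add (tendsto_const_nhds (x := (1:ℂ)))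
    simpa using this
  refine h2.congr' ?_
  filter_upwards [eventually_ne_zero_atInfWithin s] with z hz
  field_simp
  ring

lemma tendsto_abs_comp (hdiv : Tendsto (fun z => g z / z) (atInfWithin s) (𝓝 1)) :
    Tendsto (fun z => norm (g z)) (atInfWithin s) atTop := by
  have habs : Tendsto (fun z => norm (g z / z)) (atInfWithin s) (𝓝 1) := by
    have := (continuous_norm.tendsto 1).comp hdiv
    simpa [Function.comp_def] using this
  have hev : ∀ᶠ z in atInfWithin s, (1/2 : ℝ) * norm z ≤ norm (g z) := by
    filter_upwards [habs.eventually_const_le (by norm_num : (1/2:ℝ) < 1),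
      eventually_ne_zero_atInfWithin s] with z h1 h2
    rw [norm_div] at h1
    have hz : 0 < norm z := by
      simpa [norm_pos_iff] using h2
    rw [le_div_iff₀ hz] at h1
    linarith [h1]
  refine tendsto_atTop_mono' _ hev ?_
  exact (tendsto_abs_atInfWithin s).const_mul_atTop (by norm_num)

lemma tendsto_atInfWithin_comp (himg : ∀ z ∈ s, g z ∈ t)
    (habs : Tendsto (fun z => norm (g z)) (atInfWithin s) atTop) :
    Tendsto g (atInfWithin s) (atInfWithin t) := by
  rw [show atInfWithin t = _ ⊓ _ from rfl, tendsto_inf]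
  constructor
  · rw [tendsto_comap_iff]; exact habs
  · rw [tendsto_principal]
    filter_upwards [eventually_mem_atInfWithin s] with z hz using himg z hz

end maps

structure IsBoundedHull (A : Set ℂ) : Prop where
  bounded : Bornology.IsBounded A
  subset : A ⊆ closure UHP
  closure_eq : A = closure (A ∩ UHP)
  simplyConnected : SimplyConnectedSpace ↥(UHP \ A)

structure IsNormalizedMap (A : Set ℂ) (g : ℂ → ℂ) : Prop where
  analytic : AnalyticOn ℂ g (UHP \ A)
  injOn : InjOn g (UHP \ A)
  image_eq : g '' (UHP \ A) = UHP
  hydro : Tendsto (fun z => g z - z) (atInfWithin (UHP \ A)) (𝓝 0)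

def HasHalfPlaneCap (A : Set ℂ) (a : ℝ) : Prop :=
  ∃ g : ℂ → ℂ, IsNormalizedMap A g ∧
    Tendsto (fun z => z * (g z - z)) (atInfWithin (UHP \ A)) (𝓝 (a : ℂ))

structure IsPhiMap (A : Set ℂ) (Φ : ℂ → ℂ) : Prop where
  analytic : AnalyticOn ℂ Φ (UHP \ A)
  injOn : InjOn Φ (UHP \ A)
  image_eq : Φ '' (UHP \ A) = UHP
  fixes_zero : Tendsto Φ (𝓝[UHP \ A] 0) (𝓝 0)
  deriv_one : Tendsto (fun z => Φ z / z) (atInfWithin (UHP \ A)) (𝓝 1)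

lemma isOpenMapOn_of_analytic {S : Set ℂ} {f : ℂ → ℂ} (hS : IsOpen S) (hconn : IsPreconnected S)
    (han : AnalyticOnNhd ℂ f S) (hinj : InjOn f S)
    (htwo : ∃ z₁ ∈ S, ∃ z₂ ∈ S, z₁ ≠ z₂) :
    ∀ t ⊆ S, IsOpen t → IsOpen (f '' t) := by
  rcases han.is_constant_or_isOpen hconn with ⟨w, hw⟩ | h
  · rcases htwo with ⟨z₁, h₁, z₂, h₂, hne⟩
    exact absurd (hinj h₁ h₂ ((hw z₁ h₁).trans (hw z₂ h₂).symm)) hne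
  · exact h

lemma deriv_ne_punctured {S : Set ℂ} {f : ℂ → ℂ} (hS : IsOpen S)
    (han : AnalyticOnNhd ℂ f S) (hinj : InjOn f S) {z₀ : ℂ} (hz₀ : z₀ ∈ S) :
    ∀ᶠ z in 𝓝[≠] z₀, deriv f z ≠ 0 := by
  rcases ((han.deriv_of_isOpen hS) z₀ hz₀).eventually_eq_zero_or_eventually_ne_zero with h | h
  · exfalso
    rcases Metric.mem_nhds_iff.1 (Filter.inter_mem h (hS.mem_nhds hz₀)) with ⟨ε, hε, hball⟩
    have hconst : ∀ z ∈ Metric.ball z₀ ε, f z = f z₀ := by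
      intro z hz
      have hder : ∀ y ∈ Metric.ball z₀ ε, HasDerivWithinAt f (deriv f y) (Metric.ball z₀ ε) y :=
        fun y hy => ((han y (mem_of_mem_inter_right (hball hy))).differentiableAt).hasDerivAt.hasDerivWithinAt
      have hbound : ∀ y ∈ Metric.ball z₀ ε, ‖deriv f y‖ ≤ 0 := by
        intro y hy
        have : deriv f y = 0 := (hball hy).1
        simp [this]
      have := (convex_ball z₀ ε).norm_image_sub_le_of_norm_hasDerivWithin_le hder hbound
        (Metric.mem_ball_self hε) hz
      rw [← sub_eq_zero, ← norm_eq_zero]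
      have h0 : (0:ℝ) ≤ ‖f z - f z₀‖ := norm_nonneg _
      linarith [this]
    have h1 : z₀ + ((ε / 2 : ℝ) : ℂ) ∈ Metric.ball z₀ ε := by
      have hd : dist (z₀ + ((ε/2 : ℝ) : ℂ)) z₀ = ε / 2 := by
        simp [Complex.dist_eq]
        exact hε.le
      rw [Metric.mem_ball, hd]
      linarith
    have h2 := hconst _ h1
    have h3 := hinj (mem_of_mem_inter_right (hball h1)) hz₀ h2
    have h4 : ((ε / 2 : ℝ) : ℂ) ≠ 0 := by
      simp only [ne_eq, Complex.ofReal_eq_zero]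
      positivity
    have h5 : z₀ + ((ε/2 : ℝ) : ℂ) = z₀ + 0 := by rw [add_zero]; exact h3
    exact h4 (add_left_cancel h5)
  · exact h

lemma analyticAt_comp_invFunOn {S V : Set ℂ} {f u : ℂ → ℂ}
    (hS : IsOpen S) (hconn : IsPreconnected S)
    (han : AnalyticOnNhd ℂ f S) (hinj : InjOn f S)
    (himg : f '' S = V) (hV : IsOpen V)
    (htwo : ∃ z₁ ∈ S, ∃ z₂ ∈ S, z₁ ≠ z₂)
    (hu : AnalyticOnNhd ℂ u S) :
    (∀ w ∈ V, Function.invFunOn f S w ∈ S ∧ f (Function.invFunOn f S w) = w) ∧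
    (∀ z ∈ S, Function.invFunOn f S (f z) = z) ∧
    (∀ w ∈ V, ContinuousAt (Function.invFunOn f S) w) ∧
    (∀ w ∈ V, AnalyticAt ℂ (fun y => u (Function.invFunOn f S y)) w) := by
  set finv := Function.invFunOn f S with hfinvdef
  have hex : ∀ w ∈ V, ∃ z ∈ S, f z = w := by
    intro w hw
    rw [← himg] at hw
    exact hw
  have hmem : ∀ w ∈ V, finv w ∈ S := fun w hw => Function.invFunOn_mem (hex w hw)
  have hright : ∀ w ∈ V, f (finv w) = w := fun w hw => Function.invFunOn_eq (hex w hw)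
  have hleft : ∀ z ∈ S, finv (f z) = z := fun z hz => hinj.leftInvOn_invFunOn hz
  have hopen := isOpenMapOn_of_analytic hS hconn han hinj htwo
  have hcont : ∀ w ∈ V, ContinuousAt finv w := by
    intro w hw
    rw [ContinuousAt, _root_.tendsto_nhds]
    intro t ht hmemt
    have h1 : IsOpen (f '' (t ∩ S)) := hopen _ inter_subset_right (ht.inter hS)
    have h2 : w ∈ f '' (t ∩ S) := ⟨finv w, ⟨hmemt, hmem w hw⟩, hright w hw⟩
    filter_upwards [h1.mem_nhds h2] with y hy
    rcases hy with ⟨z, ⟨hzt, hzS⟩, rfl⟩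
    show finv (f z) ∈ t
    rw [hleft z hzS]
    exact hzt
  refine ⟨fun w hw => ⟨hmem w hw, hright w hw⟩, hleft, hcont, ?_⟩
  intro w₀ hw₀
  set z₀ := finv w₀ with hz₀def
  have hz₀S : z₀ ∈ S := hmem w₀ hw₀
  have hfz₀ : f z₀ = w₀ := hright w₀ hw₀
  have hVev : ∀ᶠ y in 𝓝[≠] w₀, y ∈ V := (hV.eventually_mem hw₀).filter_mono nhdsWithin_le_nhds
  have htendsto : Tendsto finv (𝓝[≠] w₀) (𝓝[≠] z₀) := by
    rw [tendsto_nhdsWithin_iff]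
    constructor
    · exact ((hcont w₀ hw₀)).mono_left nhdsWithin_le_nhds
    · filter_upwards [eventually_mem_nhdsWithin, hVev] with y hy hyV
      simp only [mem_compl_iff, mem_singleton_iff] at hy ⊢
      intro hcontra
      exact hy (by rw [← hright y hyV, hcontra, hfz₀])
  have hdiff : ∀ᶠ y in 𝓝[≠] w₀, DifferentiableAt ℂ (fun y => u (finv y)) y := by
    have hSev : ∀ᶠ y in 𝓝[≠] w₀, finv y ∈ S :=
      (((hcont w₀ hw₀)).mono_left nhdsWithin_le_nhds).eventually (hS.eventually_mem hz₀S)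
    filter_upwards [htendsto.eventually (deriv_ne_punctured hS han hinj hz₀S), hSev, hVev]
      with y hdne hyS hyV
    have hfz : f (finv y) = y := hright y hyV
    rcases han (finv y) hyS with ⟨p, hp⟩
    have hsd : HasStrictDerivAt f (deriv f (finv y)) (finv y) := by
      have := hp.hasStrictDerivAt
      rwa [← hp.deriv] at this
    have hfd := hsd.hasStrictFDerivAt_equiv hdne
    have hL := hfd.to_localInverse
    have hLcont := hfd.localInverse_continuousAt
    have hLz := hfd.localInverse_apply_image
    have hev := hfd.eventually_right_inverse
    have hevS : ∀ᶠ x in 𝓝 (f (finv y)), hfd.localInverse f _ _ x ∈ S := by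
      apply hLcont.eventually_mem
      rw [hLz]
      exact hS.mem_nhds hyS
    have hevV : ∀ᶠ x in 𝓝 (f (finv y)), x ∈ V := by
      rw [hfz]
      exact hV.eventually_mem hyV
    have heq : finv =ᶠ[𝓝 (f (finv y))] hfd.localInverse f _ _ := by
      filter_upwards [hev, hevS, hevV] with x h1 h2 h3
      exact hinj (hmem x h3) h2 (by rw [hright x h3, h1])
    have hdiffL : DifferentiableAt ℂ (hfd.localInverse f _ _) (f (finv y)) :=
      hL.differentiableAt
    have hdiffinv : DifferentiableAt ℂ finv y := by
      rw [hfz] at heq hdiffL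
      exact heq.symm.differentiableAt_iff.1 hdiffL
    exact DifferentiableAt.comp (g := u) (f := finv) y ((hu (finv y) hyS).differentiableAt) hdiffinv
  have hcontAt : ContinuousAt (fun y => u (finv y)) w₀ :=
    ContinuousAt.comp (g := u) (f := finv) ((hu z₀ hz₀S).continuousAt) (hcont w₀ hw₀)
  exact Complex.analyticAt_of_differentiable_on_punctured_nhds_of_continuousAt hdiff hcontAt

lemma abs_lt_of_normSq_lt {z w : ℂ} (h : Complex.normSq z < Complex.normSq w) :
    norm z < norm w := by
  nlinarith [Complex.sq_norm z, Complex.sq_norm w, norm_nonneg z, norm_nonneg w]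

lemma normSq_lt_one_of_abs {z : ℂ} (h : norm z < 1) : Complex.normSq z < 1 := by
  nlinarith [Complex.sq_norm z, norm_nonneg z]

lemma add_I_ne_zero {z : ℂ} (hz : 0 < z.im) : z + Complex.I ≠ 0 := by
  intro h
  have := congrArg Complex.im h
  simp at this
  linarith

lemma cayley_mem {z : ℂ} (hz : 0 < z.im) : norm ((z - Complex.I) / (z + Complex.I)) < 1 := by
  rw [norm_div, div_lt_one (norm_pos_iff.mpr (add_I_ne_zero hz))]
  apply abs_lt_of_normSq_lt
  simp only [Complex.normSq_apply, Complex.sub_re, Complex.sub_im, Complex.add_re,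
    Complex.add_im, Complex.I_re, Complex.I_im]
  nlinarith

lemma one_sub_ne_zero_of_abs_lt {u : ℂ} (hu : norm u < 1) : 1 - u ≠ 0 := by
  intro h
  have : u = 1 := by linear_combination -h
  rw [this] at hu
  simp at hu

lemma cayley_inv_mem {u : ℂ} (hu : norm u < 1) :
    0 < (Complex.I * (1 + u) / (1 - u)).im := by
  have hne : (1 : ℂ) - u ≠ 0 := one_sub_ne_zero_of_abs_lt hu
  have hns : Complex.normSq u < 1 := normSq_lt_one_of_abs hu
  rw [Complex.div_im]
  have hpos : 0 < Complex.normSq (1 - u) := Complex.normSq_pos.2 hne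
  have hnum : (Complex.I * (1 + u)).im * (1 - u).re - (Complex.I * (1 + u)).re * (1 - u).im
      = 1 - Complex.normSq u := by
    simp [Complex.mul_im, Complex.mul_re, Complex.normSq_apply]
    ring
  have : (Complex.I * (1 + u)).im * (1 - u).re / Complex.normSq (1 - u)
      - (Complex.I * (1 + u)).re * (1 - u).im / Complex.normSq (1 - u)
      = (1 - Complex.normSq u) / Complex.normSq (1 - u) := by
    rw [div_sub_div_same, hnum]
  rw [this]
  exact div_pos (by linarith) hpos

lemma cayley_left_inv {z : ℂ} (hz : 0 < z.im) :
    Complex.I * (1 + (z - Complex.I) / (z + Complex.I)) / (1 - (z - Complex.I) / (z + Complex.I)) = z := by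
  have hne := add_I_ne_zero hz
  have h2 : 1 - (z - Complex.I) / (z + Complex.I) = 2 * Complex.I / (z + Complex.I) := by
    field_simp
    ring
  have hd : 1 - (z - Complex.I) / (z + Complex.I) ≠ 0 := by
    rw [h2]
    exact div_ne_zero (by simp [Complex.I_ne_zero]) hne
  rw [div_eq_iff hd]
  field_simp
  ring

lemma cayley_right_inv {u : ℂ} (hu : norm u < 1) :
    (Complex.I * (1 + u) / (1 - u) - Complex.I) / (Complex.I * (1 + u) / (1 - u) + Complex.I) = u := by
  have hne : (1 : ℂ) - u ≠ 0 := one_sub_ne_zero_of_abs_lt hu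
  have h2 : Complex.I * (1 + u) / (1 - u) + Complex.I = 2 * Complex.I / (1 - u) := by
    field_simp
    ring
  have hd : Complex.I * (1 + u) / (1 - u) + Complex.I ≠ 0 := by
    rw [h2]
    exact div_ne_zero (by simp [Complex.I_ne_zero]) hne
  rw [div_eq_iff hd]
  field_simp
  ring

lemma blaschke_denom_ne {b z : ℂ} (hb : norm b < 1) (hz : norm z < 1) :
    1 - (starRingEnd ℂ) b * z ≠ 0 := by
  intro h
  have h1 : (starRingEnd ℂ) b * z = 1 := by linear_combination -h
  have h2 : norm ((starRingEnd ℂ) b * z) = 1 := by rw [h1]; simp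
  rw [norm_mul, Complex.norm_conj] at h2
  nlinarith [norm_nonneg b, norm_nonneg z]

lemma blaschke_mem {b z : ℂ} (hb : norm b < 1) (hz : norm z < 1) :
    norm ((z - b) / (1 - (starRingEnd ℂ) b * z)) < 1 := by
  rw [norm_div, div_lt_one (norm_pos_iff.mpr (blaschke_denom_ne hb hz))]
  apply abs_lt_of_normSq_lt
  have h1 := normSq_lt_one_of_abs hb
  have h2 := normSq_lt_one_of_abs hz
  simp only [Complex.normSq_apply, Complex.sub_re, Complex.sub_im, Complex.mul_re,
    Complex.mul_im, Complex.conj_re, Complex.conj_im, Complex.one_re, Complex.one_im] at *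
  nlinarith [mul_pos (by linarith : (0:ℝ) < 1 - (b.re * b.re + b.im * b.im))
    (by linarith : (0:ℝ) < 1 - (z.re * z.re + z.im * z.im))]

lemma conj_mul_self_ne {b : ℂ} (hb : norm b < 1) : (1 : ℂ) - (starRingEnd ℂ) b * b ≠ 0 := by
  intro h
  have h1 : (starRingEnd ℂ) b * b = 1 := by linear_combination -h
  have h2 : norm ((starRingEnd ℂ) b * b) = 1 := by rw [h1]; simp
  rw [norm_mul, Complex.norm_conj] at h2
  nlinarith [norm_nonneg b]

lemma blaschke_left_inv {b z : ℂ} (hb : norm b < 1) (hz : norm z < 1) :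
    ((z - b) / (1 - (starRingEnd ℂ) b * z) + b) / (1 + (starRingEnd ℂ) b * ((z - b) / (1 - (starRingEnd ℂ) b * z))) = z := by
  have hd := blaschke_denom_ne hb hz
  have hnb := conj_mul_self_ne hb
  have hden : 1 + (starRingEnd ℂ) b * ((z - b) / (1 - (starRingEnd ℂ) b * z))
      = (1 - (starRingEnd ℂ) b * b) / (1 - (starRingEnd ℂ) b * z) := by
    field_simp
    ring
  rw [hden, div_eq_iff (div_ne_zero hnb hd)]
  rw [div_add' _ _ _ hd, mul_div_assoc']
  congr 1
  ring

def cτ (u : ℂ) : ℂ := Complex.I * (1 + u) / (1 - u)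
def cσ (z : ℂ) : ℂ := (z - Complex.I) / (z + Complex.I)
def bl (b z : ℂ) : ℂ := (z - b) / (1 - (starRingEnd ℂ) b * z)

lemma cτ_mem {u : ℂ} (hu : norm u < 1) : cτ u ∈ UHP := cayley_inv_mem hu
lemma cσ_mem {z : ℂ} (hz : z ∈ UHP) : norm (cσ z) < 1 := cayley_mem hz
lemma cτσ {z : ℂ} (hz : z ∈ UHP) : cτ (cσ z) = z := cayley_left_inv hz
lemma cστ {u : ℂ} (hu : norm u < 1) : cσ (cτ u) = u := cayley_right_inv hu
lemma bl_mem {b z : ℂ} (hb : norm b < 1) (hz : norm z < 1) :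
    norm (bl b z) < 1 := blaschke_mem hb hz
lemma bl_inv {b z : ℂ} (hb : norm b < 1) (hz : norm z < 1) :
    bl (-b) (bl b z) = z := by
  have := blaschke_left_inv hb hz
  unfold bl
  simp only [map_neg, sub_neg_eq_add, neg_mul]
  exact this

lemma bl_analyticAt {b z : ℂ} (hb : norm b < 1) (hz : norm z < 1) :
    AnalyticAt ℂ (bl b) z := by
  unfold bl
  exact (analyticAt_id.sub analyticAt_const).div
    (analyticAt_const.sub (analyticAt_const.mul analyticAt_id)) (blaschke_denom_ne hb hz)

lemma cτ_analyticAt {u : ℂ} (hu : norm u < 1) : AnalyticAt ℂ cτ u := by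
  unfold cτ
  exact (analyticAt_const.mul (analyticAt_const.add analyticAt_id)).div
    (analyticAt_const.sub analyticAt_id) (one_sub_ne_zero_of_abs_lt hu)

lemma cσ_analyticAt {z : ℂ} (hz : z ∈ UHP) : AnalyticAt ℂ cσ z := by
  unfold cσ
  exact (analyticAt_id.sub analyticAt_const).div
    (analyticAt_id.add analyticAt_const) (add_I_ne_zero hz)

lemma uhp_auto_classification {h k : ℂ → ℂ}
    (hh : ∀ w ∈ UHP, AnalyticAt ℂ h w) (hk : ∀ w ∈ UHP, AnalyticAt ℂ k w)
    (hmaps : ∀ w ∈ UHP, h w ∈ UHP) (kmaps : ∀ w ∈ UHP, k w ∈ UHP)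
    (hkh : ∀ w ∈ UHP, k (h w) = w) (hhk : ∀ w ∈ UHP, h (k w) = w)
    (L : Filter ℂ) [hneL : L.NeBot] (hLUHP : ∀ᶠ w in L, w ∈ UHP)
    (habs : Tendsto (fun w => norm w) L atTop)
    (hlim : Tendsto (fun w => h w / w) L (𝓝 1)) :
    ∃ c : ℂ, ∀ w ∈ UHP, h w = w + c := by
  classical
  set F : ℂ → ℂ := fun u => cσ (h (cτ u)) with hFdef
  set G : ℂ → ℂ := fun u => cσ (k (cτ u)) with hGdef
  have hFmem : ∀ u : ℂ, norm u < 1 → norm (F u) < 1 :=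
    fun u hu => cσ_mem (hmaps _ (cτ_mem hu))
  have hGmem : ∀ u : ℂ, norm u < 1 → norm (G u) < 1 :=
    fun u hu => cσ_mem (kmaps _ (cτ_mem hu))
  have hGF : ∀ u : ℂ, norm u < 1 → G (F u) = u := by
    intro u hu
    show cσ (k (cτ (cσ (h (cτ u))))) = u
    rw [cτσ (hmaps _ (cτ_mem hu)), hkh _ (cτ_mem hu), cστ hu]
  have hFG : ∀ u : ℂ, norm u < 1 → F (G u) = u := by
    intro u hu
    show cσ (h (cτ (cσ (k (cτ u))))) = u
    rw [cτσ (kmaps _ (cτ_mem hu)), hhk _ (cτ_mem hu), cστ hu]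
  have h01 : norm (0 : ℂ) < 1 := by simp
  set b : ℂ := F 0 with hbdef
  have hb1 : norm b < 1 := hFmem 0 h01
  have hmb1 : norm (-b) < 1 := by simpa using hb1
  set ψ : ℂ → ℂ := fun u => bl b (F u) with hψdef
  set χ : ℂ → ℂ := fun u => G (bl (-b) u) with hχdef
  have hψmem : ∀ u : ℂ, norm u < 1 → norm (ψ u) < 1 :=
    fun u hu => bl_mem hb1 (hFmem u hu)
  have hχmem : ∀ u : ℂ, norm u < 1 → norm (χ u) < 1 :=
    fun u hu => hGmem _ (bl_mem hmb1 hu)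
  have hψ0 : ψ 0 = 0 := by
    show bl b (F 0) = 0
    rw [← hbdef]
    unfold bl
    simp
  have hχψ : ∀ u : ℂ, norm u < 1 → χ (ψ u) = u := by
    intro u hu
    show G (bl (-b) (bl b (F u))) = u
    rw [bl_inv hb1 (hFmem u hu)]
    exact hGF u hu
  have hψχ : ∀ u : ℂ, norm u < 1 → ψ (χ u) = u := by
    intro u hu
    show bl b (F (G (bl (-b) u))) = u
    rw [hFG _ (bl_mem hmb1 hu)]
    have := bl_inv hmb1 hu
    rwa [neg_neg] at this
  have hFan : ∀ u : ℂ, norm u < 1 → AnalyticAt ℂ F u := by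
    intro u hu
    exact AnalyticAt.comp (g := cσ) (f := fun u => h (cτ u)) (x := u)
      (cσ_analyticAt (hmaps _ (cτ_mem hu)))
      (AnalyticAt.comp (g := h) (f := cτ) (hh _ (cτ_mem hu)) (cτ_analyticAt hu))
  have hGan : ∀ u : ℂ, norm u < 1 → AnalyticAt ℂ G u := by
    intro u hu
    exact AnalyticAt.comp (g := cσ) (f := fun u => k (cτ u)) (x := u)
      (cσ_analyticAt (kmaps _ (cτ_mem hu)))
      (AnalyticAt.comp (g := k) (f := cτ) (hk _ (cτ_mem hu)) (cτ_analyticAt hu))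
  have hψdiff : DifferentiableOn ℂ ψ (Metric.ball 0 1) := by
    intro u hu
    rw [Metric.mem_ball, dist_zero_right] at hu
    exact (((bl_analyticAt hb1 (hFmem u hu)).comp (hFan u hu)).differentiableAt).differentiableWithinAt
  have hχdiff : DifferentiableOn ℂ χ (Metric.ball 0 1) := by
    intro u hu
    rw [Metric.mem_ball, dist_zero_right] at hu
    exact (((hGan _ (bl_mem hmb1 hu)).comp (bl_analyticAt hmb1 hu)).differentiableAt).differentiableWithinAt
  have hχ0 : χ 0 = 0 := by
    show G (bl (-b) 0) = 0
    have hb0 : bl (-b) 0 = b := by unfold bl; simp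
    rw [hb0, hbdef]
    exact hGF 0 h01
  have hψle : ∀ u : ℂ, norm u < 1 → norm (ψ u) ≤ norm u := by
    intro u hu
    refine Complex.norm_le_norm_of_mapsTo_ball hψdiff ?_ hψ0 hu
    intro x hx
    rw [Metric.mem_ball, dist_zero_right] at hx
    rw [Metric.mem_closedBall, dist_zero_right]
    exact (hψmem x hx).le
  have hχle : ∀ u : ℂ, norm u < 1 → norm (χ u) ≤ norm u := by
    intro u hu
    refine Complex.norm_le_norm_of_mapsTo_ball hχdiff ?_ hχ0 hu
    intro x hx
    rw [Metric.mem_ball, dist_zero_right] at hx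
    rw [Metric.mem_closedBall, dist_zero_right]
    exact (hχmem x hx).le
  have hψeq : ∀ u : ℂ, norm u < 1 → norm (ψ u) = norm u := by
    intro u hu
    refine le_antisymm (hψle u hu) ?_
    have h1 := hχle (ψ u) (hψmem u hu)
    rw [hχψ u hu] at h1
    exact h1
  have hhalf : norm (1/2 : ℂ) < 1 := by norm_num
  have habs_half : norm (1/2 : ℂ) ≠ 0 := by norm_num
  set l : ℂ := dslope ψ 0 (1/2 : ℂ) with hldef
  have hdl : ‖dslope ψ 0 (1/2 : ℂ)‖ = 1 / 1 := by
    rw [dslope_of_ne _ (by norm_num : (1/2 : ℂ) ≠ 0), slope_def_field, hψ0, sub_zero, sub_zero,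
      norm_div, hψeq _ hhalf]
    rw [div_self habs_half]
    norm_num
  have haffine := Complex.affine_of_mapsTo_ball_of_norm_dslope_eq_div
    (c := 0) (R₁ := 1) (R₂ := 1) hψdiff ?_ ?_ hdl
  rotate_left
  · intro x hx
    rw [Metric.mem_ball, dist_zero_right] at hx
    rw [hψ0, Metric.mem_closedBall, dist_zero_right]
    exact (hψmem x hx).le
  · rw [Metric.mem_ball, dist_zero_right]
    exact hhalf
  have hψlin : ∀ u : ℂ, norm u < 1 → ψ u = l * u := by
    intro u hu
    have := haffine (by rw [Metric.mem_ball, dist_zero_right]; exact hu)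
    simp only [hψ0, sub_zero, zero_add, smul_eq_mul] at this
    rw [this, ← hldef, mul_comm]
  have hlabs : norm l = 1 := by
    have h1 := hψeq (1/2 : ℂ) hhalf
    rw [hψlin _ hhalf, norm_mul] at h1
    field_simp at h1
    exact h1
  have hhw : ∀ w ∈ UHP, h w = cτ (bl (-b) (l * cσ w)) := by
    intro w hw
    have hu : norm (cσ w) < 1 := cσ_mem hw
    have h1 : F (cσ w) = cσ (h w) := by
      show cσ (h (cτ (cσ w))) = cσ (h w)
      rw [cτσ hw]
    have h3 : bl b (cσ (h w)) = l * cσ w := by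
      rw [← h1]
      exact hψlin _ hu
    have h4 : bl (-b) (l * cσ w) = cσ (h w) := by
      rw [← h3]
      exact bl_inv hb1 (cσ_mem (hmaps w hw))
    rw [h4, cτσ (hmaps w hw)]
  set cb : ℂ := (starRingEnd ℂ) b with hcbdef
  set α : ℂ := Complex.I * (1 + b + l + cb * l) with hαdef
  set β : ℂ := -(1 + b - l - cb * l) with hβdef
  set γ : ℂ := 1 - b - l + cb * l with hγdef
  set δ : ℂ := Complex.I * (1 - b + l - cb * l) with hδdef
  have key : ∀ w ∈ UHP, h w * (γ * w + δ) = α * w + β ∧ γ * w + δ ≠ 0 := by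
    intro w hw
    have hu : norm (cσ w) < 1 := cσ_mem hw
    set v : ℂ := l * cσ w with hvdef0
    have hvabs : norm v < 1 := by
      rw [hvdef0, norm_mul, hlabs, one_mul]
      exact hu
    have hone : (1 : ℂ) + cb * v ≠ 0 := by
      have hmv : norm (-v) < 1 := by simpa using hvabs
      have := blaschke_denom_ne hb1 hmv
      rw [mul_neg, sub_neg_eq_add] at this
      exact this
    have hBv : norm (bl (-b) v) < 1 := bl_mem hmb1 hvabs
    have hBvne : (1 : ℂ) - bl (-b) v ≠ 0 := one_sub_ne_zero_of_abs_lt hBv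
    have hwI : w + Complex.I ≠ 0 := add_I_ne_zero hw
    have hblv : bl (-b) v = (v + b) / (1 + cb * v) := by
      unfold bl
      rw [map_neg, sub_neg_eq_add, neg_mul, sub_neg_eq_add]
    have hw_form : h w = Complex.I * (1 + bl (-b) v) / (1 - bl (-b) v) := by
      rw [hhw w hw]
      rfl
    have hT1 : 1 + bl (-b) v = (1 + cb * v + v + b) / (1 + cb * v) := by
      rw [hblv]
      rw [add_div' _ _ _ hone]
      ring
    have hT2 : 1 - bl (-b) v = (1 + cb * v - v - b) / (1 + cb * v) := by
      rw [hblv]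
      rw [sub_div' hone]
      ring
    have hnum_ne : (1 : ℂ) + cb * v - v - b ≠ 0 := by
      intro hcontra
      apply hBvne
      rw [hT2, hcontra, zero_div]
    have hvdef : v = l * ((w - Complex.I) / (w + Complex.I)) := by
      rw [hvdef0]
      rfl
    have eq1 : h w * (1 - bl (-b) v) = Complex.I * (1 + bl (-b) v) := by
      rw [hw_form]
      field_simp
    have eq2 : h w * ((1 + cb * v - v - b) / (1 + cb * v))
        = Complex.I * ((1 + cb * v + v + b) / (1 + cb * v)) := by
      rw [← hT1, ← hT2]
      exact eq1
    have eq3 : h w * (1 + cb * v - v - b) = Complex.I * (1 + cb * v + v + b) := by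
      field_simp [hone] at eq2
      linear_combination eq2
    have e2 : (1 + cb * v - v - b) * (w + Complex.I) = γ * w + δ := by
      rw [hvdef, hγdef, hδdef]
      field_simp
      ring
    constructor
    · rw [← e2]
      calc h w * ((1 + cb * v - v - b) * (w + Complex.I))
          = (h w * (1 + cb * v - v - b)) * (w + Complex.I) := by ring
        _ = Complex.I * (1 + cb * v + v + b) * (w + Complex.I) := by rw [eq3]
        _ = α * w + β := by
            rw [hvdef, hαdef, hβdef]
            field_simp
            linear_combination (1 - cb * l - l + b) * Complex.I_sq
    · rw [← e2]
      exact mul_ne_zero hnum_ne hwI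
  have hIUHP : Complex.I ∈ UHP := by
    show (0 : ℝ) < Complex.I.im
    simp
  have hwinv : Tendsto (fun w : ℂ => w⁻¹) L (𝓝 0) := by
    rw [tendsto_zero_iff_norm_tendsto_zero]
    have := habs.inv_tendsto_atTop
    simpa using (show Tendsto (fun w : ℂ => ‖w‖⁻¹) L (𝓝 0) from this)
  by_cases hγ0 : γ = 0
  · -- main case : h w = w + β/δ
    have hδ0 : δ ≠ 0 := by
      have := (key Complex.I hIUHP).2
      rw [hγ0, zero_mul, zero_add] at this
      exact this
    have hcongr : (fun w => h w / w) =ᶠ[L] (fun w => α / δ + (β / δ) * w⁻¹) := by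
      filter_upwards [hLUHP, habs.eventually_ge_atTop 1] with w hw hw1
      have hw0 : w ≠ 0 := by
        intro h0
        rw [h0] at hw1
        simp at hw1
        linarith
      have hmn := (key w hw).1
      rw [hγ0, zero_mul, zero_add] at hmn
      have hhw2 : h w = (α * w + β) / δ := by
        rw [eq_div_iff hδ0]
        exact hmn
      rw [hhw2]
      field_simp [hδ0, hw0]
    have hlim2 : Tendsto (fun w => α / δ + (β / δ) * w⁻¹) L (𝓝 (α / δ)) := by
      have := (tendsto_const_nhds (x := α / δ)).add ((tendsto_const_nhds (x := β / δ)).mul hwinv)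
      simpa using this
    have hαδ : α / δ = 1 := tendsto_nhds_unique (hlim2.congr' hcongr.symm) hlim
    have hα : α = δ := by
      rwa [div_eq_one_iff_eq hδ0] at hαδ
    refine ⟨β / δ, ?_⟩
    intro w hw
    have hmn := (key w hw).1
    rw [hγ0, zero_mul, zero_add, hα] at hmn
    field_simp [hδ0]
    linear_combination hmn
  · -- contradiction case
    exfalso
    have habs2 : Tendsto (fun w => norm (γ * w + δ)) L atTop := by
      have hlow : Tendsto (fun w => norm γ * norm w + -norm δ) L atTop :=
        tendsto_atTop_add_const_right _ _ (habs.const_mul_atTop (norm_pos_iff.mpr hγ0))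
      refine tendsto_atTop_mono' _ ?_ hlow
      filter_upwards [] with w
      have h1 : norm (γ * w + δ + -δ) ≤ norm (γ * w + δ) + norm (-δ) :=
        norm_add_le _ _
      simp only [add_neg_cancel_right, norm_neg] at h1
      rw [norm_mul] at h1
      linarith
    have hinv0 : Tendsto (fun w => (γ * w + δ)⁻¹) L (𝓝 0) := by
      rw [tendsto_zero_iff_norm_tendsto_zero]
      have := habs2.inv_tendsto_atTop
      simpa using (show Tendsto (fun w : ℂ => ‖γ * w + δ‖⁻¹) L (𝓝 0) from this)
    have hnum : Tendsto (fun w => α + β * w⁻¹) L (𝓝 α) := by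
      have := (tendsto_const_nhds (x := α)).add ((tendsto_const_nhds (x := β)).mul hwinv)
      simpa using this
    have hprod : Tendsto (fun w => (α + β * w⁻¹) * (γ * w + δ)⁻¹) L (𝓝 0) := by
      have := hnum.mul hinv0
      simpa using this
    have hcongr : (fun w => h w / w) =ᶠ[L] (fun w => (α + β * w⁻¹) * (γ * w + δ)⁻¹) := by
      filter_upwards [hLUHP, habs.eventually_ge_atTop 1] with w hw hw1
      have hw0 : w ≠ 0 := by
        intro h0
        rw [h0] at hw1
        simp at hw1
        linarith
      obtain ⟨hmn, hdn⟩ := key w hw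
      have hhw2 : h w = (α * w + β) / (γ * w + δ) := by
        rw [eq_div_iff hdn]
        exact hmn
      rw [hhw2]
      field_simp [hdn, hw0]
      try ring
      try exact Or.inl trivial
    have : (1 : ℂ) = 0 := tendsto_nhds_unique hlim (hprod.congr' hcongr.symm)
    exact one_ne_zero this

lemma phi_eq_g_add_const {A' : Set ℂ} (hA' : IsBoundedHull A') {g' Φ' : ℂ → ℂ}
    (hg : IsNormalizedMap A' g') (hPhi : IsPhiMap A' Φ') :
    ∃ c : ℝ, ∀ z ∈ UHP \ A', g' z = Φ' z + (c : ℂ) := by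
  set S := UHP \ A' with hSdef
  have hA'closed : IsClosed A' := hA'.closure_eq ▸ isClosed_closure
  have hSopen : IsOpen S := isOpen_UHP.sdiff hA'closed
  have hunb := unbounded_UHP_diff hA'.bounded
  haveI hNB : (atInfWithin S).NeBot := atInfWithin_neBot hunb
  have htwo : ∃ z₁ ∈ S, ∃ z₂ ∈ S, z₁ ≠ z₂ := by
    obtain ⟨z₁, h₁, hr₁⟩ := hunb 1
    obtain ⟨z₂, h₂, hr₂⟩ := hunb (norm z₁ + 1)
    refine ⟨z₁, h₁, z₂, h₂, ?_⟩
    intro h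
    rw [← h] at hr₂
    linarith
  have hconn : IsPreconnected S := by
    haveI := hA'.simplyConnected
    have : IsPathConnected S := isPathConnected_iff_pathConnectedSpace.2 inferInstance
    exact this.isConnected.isPreconnected
  have hΦan : AnalyticOnNhd ℂ Φ' S := (hSopen.analyticOn_iff_analyticOnNhd).1 hPhi.analytic
  have hgan : AnalyticOnNhd ℂ g' S := (hSopen.analyticOn_iff_analyticOnNhd).1 hg.analytic
  obtain ⟨hΦinv, hΦleft, hΦcont, hhan⟩ := analyticAt_comp_invFunOn hSopen hconn hΦan
    hPhi.injOn hPhi.image_eq isOpen_UHP htwo hgan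
  obtain ⟨hginv, hgleft, hgcont, hkan⟩ := analyticAt_comp_invFunOn hSopen hconn hgan
    hg.injOn hg.image_eq isOpen_UHP htwo hΦan
  set h : ℂ → ℂ := fun y => g' (Function.invFunOn Φ' S y) with hhdef
  set k : ℂ → ℂ := fun y => Φ' (Function.invFunOn g' S y) with hkdef
  have hmaps : ∀ w ∈ UHP, h w ∈ UHP := by
    intro w hw
    have : g' (Function.invFunOn Φ' S w) ∈ g' '' S := mem_image_of_mem _ (hΦinv w hw).1
    rwa [hg.image_eq] at this
  have kmaps : ∀ w ∈ UHP, k w ∈ UHP := by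
    intro w hw
    have : Φ' (Function.invFunOn g' S w) ∈ Φ' '' S := mem_image_of_mem _ (hginv w hw).1
    rwa [hPhi.image_eq] at this
  have hkh : ∀ w ∈ UHP, k (h w) = w := by
    intro w hw
    show Φ' (Function.invFunOn g' S (g' (Function.invFunOn Φ' S w))) = w
    rw [hgleft _ (hΦinv w hw).1, (hΦinv w hw).2]
  have hhk : ∀ w ∈ UHP, h (k w) = w := by
    intro w hw
    show g' (Function.invFunOn Φ' S (Φ' (Function.invFunOn g' S w))) = w
    rw [hΦleft _ (hginv w hw).1, (hginv w hw).2]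
  set L := Filter.map Φ' (atInfWithin S) with hLdef
  haveI : L.NeBot := hNB.map _
  have hLUHP : ∀ᶠ w in L, w ∈ UHP := by
    rw [hLdef, Filter.eventually_map]
    filter_upwards [eventually_mem_atInfWithin S] with z hz
    have : Φ' z ∈ Φ' '' S := mem_image_of_mem _ hz
    rwa [hPhi.image_eq] at this
  have habsΦ : Tendsto (fun z => norm (Φ' z)) (atInfWithin S) atTop :=
    tendsto_abs_comp hPhi.deriv_one
  have habsL : Tendsto (fun w => norm w) L atTop := by
    rw [hLdef, Filter.tendsto_map'_iff]
    exact habsΦ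
  have hΦne : ∀ᶠ z in atInfWithin S, Φ' z ≠ 0 := by
    filter_upwards [habsΦ.eventually_ge_atTop 1] with z hz
    intro h0
    rw [h0] at hz
    simp at hz
    linarith
  have hglim : Tendsto (fun w => h w / w) L (𝓝 1) := by
    rw [hLdef, Filter.tendsto_map'_iff]
    have hgz : Tendsto (fun z => g' z / z) (atInfWithin S) (𝓝 1) :=
      tendsto_div_one_of_hydro hg.hydro
    have hzΦ : Tendsto (fun z => z / Φ' z) (atInfWithin S) (𝓝 1) := by
      have h1 : Tendsto (fun z => (Φ' z / z)⁻¹) (atInfWithin S) (𝓝 1) := by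
        simpa using hPhi.deriv_one.inv₀ one_ne_zero
      refine h1.congr' ?_
      filter_upwards [eventually_ne_zero_atInfWithin S, hΦne] with z hz hz2
      field_simp
    have hcomb : Tendsto (fun z => (g' z / z) * (z / Φ' z)) (atInfWithin S) (𝓝 1) := by
      simpa using hgz.mul hzΦ
    refine hcomb.congr' ?_
    filter_upwards [eventually_mem_atInfWithin S, eventually_ne_zero_atInfWithin S, hΦne]
      with z hz hz0 hΦ0
    show g' z / z * (z / Φ' z) = ((fun w => h w / w) ∘ Φ') z
    have hval : h (Φ' z) = g' z := by
      show g' (Function.invFunOn Φ' S (Φ' z)) = g' z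
      rw [hΦleft z hz]
    show g' z / z * (z / Φ' z) = h (Φ' z) / Φ' z
    rw [hval]
    field_simp
  obtain ⟨c, hc⟩ := uhp_auto_classification hhan hkan hmaps kmaps hkh hhk L hLUHP habsL hglim
  have hmain : ∀ z ∈ S, g' z = Φ' z + c := by
    intro z hz
    have hΦz : Φ' z ∈ UHP := by
      have := mem_image_of_mem Φ' hz
      rwa [hPhi.image_eq] at this
    have hval : h (Φ' z) = g' z := by
      show g' (Function.invFunOn Φ' S (Φ' z)) = g' z
      rw [hΦleft z hz]
    have := hc (Φ' z) hΦz
    rwa [hval] at this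
  have him : c.im = 0 := by
    rcases lt_trichotomy c.im 0 with hlt | heq | hgt
    · exfalso
      set w₀ : ℂ := ((-c.im / 2 : ℝ) : ℂ) * Complex.I with hw₀
      have hw₀mem : w₀ ∈ UHP := by
        show 0 < w₀.im
        rw [hw₀]
        simp
        linarith
      obtain ⟨z, hz, hzeq⟩ : w₀ ∈ Φ' '' S := by rw [hPhi.image_eq]; exact hw₀mem
      have h1 : g' z = w₀ + c := by rw [hmain z hz, hzeq]
      have h2 : g' z ∈ UHP := by
        have := mem_image_of_mem g' hz
        rwa [hg.image_eq] at this
      have h3 : 0 < (w₀ + c).im := by rw [← h1]; exact h2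
      rw [Complex.add_im, hw₀] at h3
      simp at h3
      linarith
    · exact heq
    · exfalso
      set w₀ : ℂ := ((c.im / 2 : ℝ) : ℂ) * Complex.I with hw₀
      have hw₀mem : w₀ ∈ UHP := by
        show 0 < w₀.im
        rw [hw₀]
        simp
        linarith
      obtain ⟨z, hz, hzeq⟩ : w₀ ∈ g' '' S := by rw [hg.image_eq]; exact hw₀mem
      have h1 : Φ' z = w₀ - c := by
        have := hmain z hz
        rw [hzeq] at this
        linear_combination -this
      have h2 : Φ' z ∈ UHP := by
        have := mem_image_of_mem Φ' hz
        rwa [hPhi.image_eq] at this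
      have h3 : 0 < (w₀ - c).im := by rw [← h1]; exact h2
      rw [Complex.sub_im, hw₀] at h3
      simp at h3
      linarith
  refine ⟨c.re, ?_⟩
  intro z hz
  rw [hmain z hz]
  congr 1
  exact (Complex.ext (by simp) (by simp [him])).symm

/-- half-plane capacity is additive under the semigroup product of hulls:
`Φ_{A·A'} = Φ_A ∘ Φ_{A'}`, i.e. `A·A' = A' ∪ (Φ_{A'}⁻¹ A)`, and
`a(A·A') = a(A) + a(A')`. -/
theorem halfPlaneCap_prod (A A' : Set ℂ) (a a' : ℝ) (Φ' : ℂ → ℂ)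
    (hA : IsBoundedHull A) (hA' : IsBoundedHull A')
    (h0 : (0 : ℂ) ∉ A) (h0' : (0 : ℂ) ∉ A')
    (hcap : HasHalfPlaneCap A a) (hcap' : HasHalfPlaneCap A' a')
    (hPhi : IsPhiMap A' Φ') :
    HasHalfPlaneCap (A' ∪ ((UHP \ A') ∩ Φ' ⁻¹' A)) (a + a') := by
  obtain ⟨gA, hgA, hcapA⟩ := hcap
  obtain ⟨g', hg', hcapA'⟩ := hcap'
  obtain ⟨c, hc⟩ := phi_eq_g_add_const hA' hg' hPhi
  set S' := UHP \ A' with hS'def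
  set T := UHP \ (A' ∪ (S' ∩ Φ' ⁻¹' A)) with hTdef
  have hAclosed : IsClosed A := hA.closure_eq ▸ isClosed_closure
  have hA'closed : IsClosed A' := hA'.closure_eq ▸ isClosed_closure
  have hS'open : IsOpen S' := isOpen_UHP.sdiff hA'closed
  have hSopen : IsOpen (UHP \ A) := isOpen_UHP.sdiff hAclosed
  have hTsub : T ⊆ S' := fun z hz => ⟨hz.1, fun h => hz.2 (Or.inl h)⟩
  have hTeq : ∀ z, z ∈ T ↔ z ∈ S' ∧ Φ' z ∉ A := by
    intro z
    constructor
    · intro hz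
      exact ⟨hTsub hz, fun h => hz.2 (Or.inr ⟨hTsub hz, h⟩)⟩
    · rintro ⟨hz, h⟩
      refine ⟨hz.1, ?_⟩
      rintro (h' | h')
      · exact hz.2 h'
      · exact h h'.2
  have hΦan : AnalyticOnNhd ℂ Φ' S' := (hS'open.analyticOn_iff_analyticOnNhd).1 hPhi.analytic
  have hgAan : AnalyticOnNhd ℂ gA (UHP \ A) := (hSopen.analyticOn_iff_analyticOnNhd).1 hgA.analytic
  have hmapsto : ∀ z ∈ T, Φ' z ∈ UHP \ A := by
    intro z hz
    refine ⟨?_, ((hTeq z).1 hz).2⟩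
    have : Φ' z ∈ Φ' '' S' := mem_image_of_mem _ (hTsub hz)
    rw [hPhi.image_eq] at this
    exact this
  have himage : Φ' '' T = UHP \ A := by
    apply Subset.antisymm
    · rintro w ⟨z, hz, rfl⟩
      exact hmapsto z hz
    · rintro w ⟨hw, hwA⟩
      have : w ∈ Φ' '' S' := by rw [hPhi.image_eq]; exact hw
      rcases this with ⟨z, hz, rfl⟩
      exact ⟨z, (hTeq z).2 ⟨hz, hwA⟩, rfl⟩
  have hTopen : IsOpen T := by
    rw [isOpen_iff_mem_nhds]
    intro z hz
    have h1 : S' ∈ 𝓝 z := hS'open.mem_nhds (hTsub hz)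
    have h2 : Φ' ⁻¹' Aᶜ ∈ 𝓝 z :=
      (hΦan z (hTsub hz)).continuousAt.preimage_mem_nhds
        (hAclosed.isOpen_compl.mem_nhds ((hTeq z).1 hz).2)
    filter_upwards [h1, h2] with w hw1 hw2
    exact (hTeq w).2 ⟨hw1, hw2⟩
  have hle : atInfWithin T ≤ atInfWithin S' := atInfWithin_mono hTsub
  have hdiv' : Tendsto (fun z => Φ' z / z) (atInfWithin T) (𝓝 1) := hPhi.deriv_one.mono_left hle
  have habs' : Tendsto (fun z => norm (Φ' z)) (atInfWithin T) atTop := tendsto_abs_comp hdiv'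
  have hΦT : Tendsto Φ' (atInfWithin T) (atInfWithin (UHP \ A)) :=
    tendsto_atInfWithin_comp hmapsto habs'
  refine ⟨fun z => gA (Φ' z) + (c : ℂ), ⟨?_, ?_, ?_, ?_⟩, ?_⟩
  · -- analytic
    refine AnalyticOnNhd.analyticOn ?_
    intro z hz
    exact ((hgAan _ (hmapsto z hz)).comp (hΦan z (hTsub hz))).add analyticAt_const
  · -- injOn
    intro z₁ hz₁ z₂ hz₂ h
    have h' : gA (Φ' z₁) = gA (Φ' z₂) := by
      have := add_right_cancel h
      exact this
    have := hgA.injOn (hmapsto z₁ hz₁) (hmapsto z₂ hz₂) h'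
    exact hPhi.injOn (hTsub hz₁) (hTsub hz₂) this
  · -- image_eq
    ext w
    constructor
    · rintro ⟨z, hz, rfl⟩
      have h1 : gA (Φ' z) ∈ UHP := by
        rw [← hgA.image_eq]
        exact mem_image_of_mem gA (hmapsto z hz)
      simp only [UHP, mem_setOf_eq] at h1 ⊢
      simpa using h1
    · intro hw
      have hw' : w - (c : ℂ) ∈ UHP := by
        simp only [UHP, mem_setOf_eq] at hw ⊢
        simpa using hw
      have : w - (c : ℂ) ∈ gA '' (UHP \ A) := by rw [hgA.image_eq]; exact hw'
      rcases this with ⟨y, hy, hgAy⟩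
      have : y ∈ Φ' '' T := by rw [himage]; exact hy
      rcases this with ⟨z, hz, rfl⟩
      exact ⟨z, hz, by show gA (Φ' z) + (c:ℂ) = w; rw [hgAy]; ring⟩
  · -- hydro
    have hterm1 : Tendsto (fun z => gA (Φ' z) - Φ' z) (atInfWithin T) (𝓝 0) := by
      have := hgA.hydro.comp hΦT
      simpa [Function.comp_def] using this
    have hterm2 : Tendsto (fun z => g' z - z) (atInfWithin T) (𝓝 0) := hg'.hydro.mono_left hle
    have hsum : Tendsto (fun z => (gA (Φ' z) - Φ' z) + (g' z - z)) (atInfWithin T) (𝓝 0) := by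
      simpa using hterm1.add hterm2
    refine hsum.congr' ?_
    filter_upwards [eventually_mem_atInfWithin T] with z hz
    rw [hc z (hTsub hz)]
    ring
  · -- capacity
    have hcapA_T : Tendsto (fun z => Φ' z * (gA (Φ' z) - Φ' z)) (atInfWithin T) (𝓝 (a : ℂ)) := by
      have := hcapA.comp hΦT
      simpa [Function.comp_def] using this
    have hΦne : ∀ᶠ z in atInfWithin T, Φ' z ≠ 0 := by
      filter_upwards [habs'.eventually_ge_atTop 1] with z hz
      intro h
      rw [h] at hz
      simp at hz
      linarith
    have hzdiv : Tendsto (fun z => z / Φ' z) (atInfWithin T) (𝓝 1) := by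
      have h1 : Tendsto (fun z => (Φ' z / z)⁻¹) (atInfWithin T) (𝓝 1) := by
        simpa using hdiv'.inv₀ one_ne_zero
      refine h1.congr' ?_
      filter_upwards [eventually_ne_zero_atInfWithin T, hΦne] with z hz hz2
      field_simp
    have hterm1 : Tendsto (fun z => z * (gA (Φ' z) - Φ' z)) (atInfWithin T) (𝓝 (a : ℂ)) := by
      have h1 : Tendsto (fun z => (z / Φ' z) * (Φ' z * (gA (Φ' z) - Φ' z)))
          (atInfWithin T) (𝓝 (a : ℂ)) := by
        simpa using hzdiv.mul hcapA_T
      refine h1.congr' ?_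
      filter_upwards [hΦne] with z hz
      field_simp
    have hterm2 : Tendsto (fun z => z * (g' z - z)) (atInfWithin T) (𝓝 (a' : ℂ)) :=
      hcapA'.mono_left hle
    have hsum : Tendsto (fun z => z * (gA (Φ' z) - Φ' z) + z * (g' z - z))
        (atInfWithin T) (𝓝 ((a : ℂ) + a')) := hterm1.add hterm2
    have hcast : ((a + a' : ℝ) : ℂ) = (a : ℂ) + a' := by push_cast; ring
    rw [hcast]
    refine hsum.congr' ?_
    filter_upwards [eventually_mem_atInfWithin T] with z hz
    rw [hc z (hTsub hz)]
    ring
end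
end

section
/- Let G_t(z) solve the ODE ∂_t G_t(z) = 2G_t(z)/(G_t(z) − 1) with G_0(z) = z. Then for each t ≥ 0, G_t is analytic at 0 with G_t(0) = 0 and G_t'(0) = exp(−2t). -/
open Complex Filter Set Topology

noncomputable section

/-! With `F w = w e^{-w}` one has `F'(w) · 2w/(w-1) = -2 F(w)`, so `F(G_t z) = e^{-2t} F(z)` as long
as the trajectory avoids the pole `1`. Since `|F(w)| ≥ |w| e^{-|w|}`, this conservation law keeps the
trajectory of a small `z` inside a small disc for all time, and there `G_t = F⁻¹ (e^{-2t} F)`, where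
`F⁻¹` is the analytic local inverse of `F` at `0` (`F'(0) = 1`). -/

theorem ContinuousOn.forall_lt_of_ne_at_first_hit {f : ℝ → ℝ} {a b c : ℝ}
    (hf : ContinuousOn f (Icc a b)) (ha : f a < c)
    (hfirst : ∀ u ∈ Icc a b, (∀ v ∈ Ico a u, f v < c) → f u ≠ c) :
    ∀ u ∈ Icc a b, f u < c := by
  by_contra! hhit
  set C := Icc a b ∩ f ⁻¹' Ici c
  have hC : IsClosed C := hf.preimage_isClosed_of_isClosed isClosed_Icc isClosed_Ici
  have hCbdd : BddBelow C := ⟨a, fun _ hx => hx.1.1⟩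
  have hT : sInf C ∈ C := hC.csInf_mem hhit hCbdd
  have hbefore : ∀ v ∈ Ico a (sInf C), f v < c := fun v hv =>
    not_le.mp fun hcv => hv.2.not_ge (csInf_le hCbdd ⟨⟨hv.1, hv.2.le.trans hT.1.2⟩, hcv⟩)
  obtain ⟨u, hu, hfu⟩ : ∃ u ∈ Icc a (sInf C), f u = c :=
    intermediate_value_Icc hT.1.1 (hf.mono (Icc_subset_Icc_right hT.1.2)) ⟨ha.le, hT.2⟩
  exact hfirst u ⟨hu.1, hu.2.trans hT.1.2⟩
    (fun v hv => hbefore v ⟨hv.1, hv.2.trans_le hu.2⟩) hfu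

theorem AnalyticAt.exists_eventually_left_inverse {𝕜 : Type*} [NontriviallyNormedField 𝕜]
    [CompleteSpace 𝕜] [CharZero 𝕜] {f : 𝕜 → 𝕜} {x : 𝕜} (hf : AnalyticAt 𝕜 f x)
    (hf' : deriv f x ≠ 0) :
    ∃ g : 𝕜 → 𝕜, AnalyticAt 𝕜 g (f x) ∧ HasDerivAt g (deriv f x)⁻¹ (f x) ∧
      ∀ᶠ y in 𝓝 x, g (f y) = y :=
  ⟨_, hf.analyticAt_localInverse hf', (hf.hasStrictDerivAt.to_localInverse hf').hasDerivAt,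
    hf.hasStrictDerivAt.eventually_left_inverse hf'⟩

def mulExpNeg (w : ℂ) : ℂ := w * exp (-w)

theorem hasDerivAt_mulExpNeg (w : ℂ) : HasDerivAt mulExpNeg ((1 - w) * exp (-w)) w :=
  ((hasDerivAt_id' w).mul (hasDerivAt_neg w).cexp).congr_deriv (by ring)

theorem analyticAt_mulExpNeg (w : ℂ) : AnalyticAt ℂ mulExpNeg w := by
  unfold mulExpNeg; fun_prop

theorem continuous_mulExpNeg : Continuous mulExpNeg := by
  unfold mulExpNeg; fun_prop

@[simp] theorem mulExpNeg_zero : mulExpNeg 0 = 0 := by simp [mulExpNeg]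

theorem deriv_mulExpNeg_zero : deriv mulExpNeg 0 = 1 := by
  simpa using (hasDerivAt_mulExpNeg 0).deriv

theorem norm_mul_exp_neg_norm_le_norm_mulExpNeg (w : ℂ) :
    ‖w‖ * Real.exp (-‖w‖) ≤ ‖mulExpNeg w‖ := by
  rw [mulExpNeg, norm_mul, norm_exp, neg_re]
  gcongr
  exact re_le_norm w

theorem mulExpNeg_deriv_mul_vectorField {w : ℂ} (hw : w ≠ 1) :
    (1 - w) * exp (-w) * (2 * w / (w - 1)) = -2 * mulExpNeg w := by
  have : w - 1 ≠ 0 := sub_ne_zero.mpr hw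
  rw [mulExpNeg]
  field_simp
  ring

section LoewnerFlow

variable {G : ℝ → ℂ → ℂ} {r : ℝ}

theorem mulExpNeg_flow_eq (hinit : ∀ z ∈ Metric.ball (0 : ℂ) r, G 0 z = z)
    (hODE : ∀ z ∈ Metric.ball (0 : ℂ) r, ∀ t : ℝ, 0 ≤ t →
      HasDerivAt (fun s => G s z) (2 * G t z / (G t z - 1)) t)
    {z : ℂ} (hz : z ∈ Metric.ball (0 : ℂ) r) {s : ℝ} (hs : 0 ≤ s)
    (hne : ∀ u ∈ Ico 0 s, G u z ≠ 1) :
    mulExpNeg (G s z) = exp (-2 * s) * mulExpNeg z := by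
  set g : ℝ → ℂ := fun u => exp (2 * u) * mulExpNeg (G u z)
  have hexp (u : ℝ) : HasDerivAt (fun u : ℝ => exp (2 * u)) (exp (2 * u) * 2) u :=
    ((hasDerivAt_id (u : ℂ)).const_mul 2).cexp.comp_ofReal.congr_deriv (by simp)
  have hcont : ContinuousOn g (Icc 0 s) := fun u hu =>
    ((hexp u).continuousAt.mul
      (continuous_mulExpNeg.continuousAt.comp (hODE z hz u hu.1).continuousAt)).continuousWithinAt
  have hderiv : ∀ u ∈ Ico 0 s, HasDerivWithinAt g 0 (Ici u) u := by
    intro u hu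
    have := (hexp u).mul ((hasDerivAt_mulExpNeg _).comp u (hODE z hz u hu.1))
    refine (this.congr_deriv ?_).hasDerivWithinAt
    rw [Function.comp_apply, mulExpNeg_deriv_mul_vectorField (hne u hu)]
    ring
  have hgs : g s = g 0 := constant_of_has_deriv_right_zero hcont hderiv s ⟨hs, le_rfl⟩
  simp only [g, hinit z hz, ofReal_zero, mul_zero, exp_zero, one_mul] at hgs
  rw [← hgs, ← mul_assoc, ← exp_add]
  simp

theorem norm_flow_lt (hinit : ∀ z ∈ Metric.ball (0 : ℂ) r, G 0 z = z)
    (hODE : ∀ z ∈ Metric.ball (0 : ℂ) r, ∀ t : ℝ, 0 ≤ t →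
      HasDerivAt (fun s => G s z) (2 * G t z / (G t z - 1)) t)
    {z : ℂ} (hz : z ∈ Metric.ball (0 : ℂ) r) {ρ : ℝ} (hρ : ρ ≤ 1) (hzρ : ‖z‖ < ρ)
    (hFz : ‖mulExpNeg z‖ < ρ * Real.exp (-ρ)) {t : ℝ} (ht : 0 ≤ t) :
    ‖G t z‖ < ρ := by
  refine ContinuousOn.forall_lt_of_ne_at_first_hit (f := fun u => ‖G u z‖)
    (fun u hu => (hODE z hz u hu.1).continuousAt.norm.continuousWithinAt)
    (by simpa [hinit z hz]) ?_ t ⟨ht, le_rfl⟩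
  intro u hu hbefore hhit
  have hne : ∀ v ∈ Ico 0 u, G v z ≠ 1 := fun v hv h1 => by
    simpa [h1] using (hbefore v hv).trans_le hρ
  have : ρ * Real.exp (-ρ) ≤ ‖mulExpNeg z‖ := calc
    ρ * Real.exp (-ρ) ≤ ‖mulExpNeg (G u z)‖ := by
      simpa [hhit] using norm_mul_exp_neg_norm_le_norm_mulExpNeg (G u z)
    _ = Real.exp (-2 * u) * ‖mulExpNeg z‖ := by
      rw [mulExpNeg_flow_eq hinit hODE hz hu.1 hne, norm_mul, norm_exp]
      simp
    _ ≤ ‖mulExpNeg z‖ :=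
      mul_le_of_le_one_left (norm_nonneg _) (Real.exp_le_one_iff.mpr (by linarith [hu.1]))
  linarith

theorem flow_eventuallyEq_comp_mulExpNeg (hr : 0 < r)
    (hinit : ∀ z ∈ Metric.ball (0 : ℂ) r, G 0 z = z)
    (hODE : ∀ z ∈ Metric.ball (0 : ℂ) r, ∀ t : ℝ, 0 ≤ t →
      HasDerivAt (fun s => G s z) (2 * G t z / (G t z - 1)) t)
    {L : ℂ → ℂ} (hL : ∀ᶠ w in 𝓝 0, L (mulExpNeg w) = w) {t : ℝ} (ht : 0 ≤ t) :
    G t =ᶠ[𝓝 0] fun w => L (exp (-2 * t) * mulExpNeg w) := by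
  obtain ⟨ρ₀, hρ₀, hball⟩ := Metric.eventually_nhds_iff_ball.mp hL
  set ρ := min ρ₀ 1
  have hρ : 0 < ρ := lt_min hρ₀ one_pos
  have hsmall : ∀ᶠ w in 𝓝 (0 : ℂ), ‖mulExpNeg w‖ < ρ * Real.exp (-ρ) :=
    continuous_mulExpNeg.norm.continuousAt.eventually_lt continuousAt_const
      (by simpa using mul_pos hρ (Real.exp_pos _))
  filter_upwards [Metric.ball_mem_nhds 0 hr, Metric.ball_mem_nhds 0 hρ, hsmall]
    with w hwr hwρ hwF
  have htrap : ∀ u, 0 ≤ u → ‖G u w‖ < ρ := fun u hu =>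
    norm_flow_lt hinit hODE hwr (min_le_right _ _) (mem_ball_zero_iff.mp hwρ) hwF hu
  have hne : ∀ u ∈ Ico 0 t, G u w ≠ 1 := fun u hu h1 => by
    simpa [h1] using (htrap u hu.1).trans_le (min_le_right _ _)
  have hGt : G t w ∈ Metric.ball 0 ρ₀ :=
    mem_ball_zero_iff.mpr ((htrap t ht).trans_le (min_le_left _ _))
  rw [← hball _ hGt, mulExpNeg_flow_eq hinit hODE hwr ht hne]

end LoewnerFlow

/-- let `G_t z` solve `∂_t G_t z = 2 G_t z / (G_t z - 1)` with
`G_0 z = z` (for `z` in a neighborhood of `0`).  Then for each `t ≥ 0`, `G_t` is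
analytic at `0` with `G_t 0 = 0` and `G_t'(0) = exp (-2 t)`. -/
theorem loewner_flow_deriv_at_zero (G : ℝ → ℂ → ℂ) (r : ℝ) (hr : 0 < r)
    (hinit : ∀ z ∈ Metric.ball (0 : ℂ) r, G 0 z = z)
    (hODE : ∀ z ∈ Metric.ball (0 : ℂ) r, ∀ t : ℝ, 0 ≤ t →
      HasDerivAt (fun s => G s z) (2 * G t z / (G t z - 1)) t) :
    ∀ t : ℝ, 0 ≤ t →
      AnalyticAt ℂ (G t) 0 ∧ G t 0 = 0 ∧ deriv (G t) 0 = Complex.exp (-2 * t) := by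
  intro t ht
  obtain ⟨L, hLan, hLd, hLF⟩ :=
    (analyticAt_mulExpNeg 0).exists_eventually_left_inverse (by simp [deriv_mulExpNeg_zero])
  rw [deriv_mulExpNeg_zero, inv_one] at hLd
  have hG := flow_eventuallyEq_comp_mulExpNeg hr hinit hODE hLF ht
  set ψ : ℂ → ℂ := fun w => exp (-2 * t) * mulExpNeg w
  have hψ0 : ψ 0 = mulExpNeg 0 := by simp [ψ]
  have hψan : AnalyticAt ℂ ψ 0 := analyticAt_const.mul (analyticAt_mulExpNeg 0)
  have hψ : HasDerivAt ψ (exp (-2 * t)) 0 :=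
    ((hasDerivAt_mulExpNeg 0).const_mul _).congr_deriv (by simp)
  refine ⟨(hLan.comp_of_eq hψan hψ0).congr hG.symm, ?_, ?_⟩
  · simpa [hG.eq_of_nhds] using hLF.self_of_nhds
  · rw [((hLd.comp_of_eq 0 hψ hψ0.symm).congr_of_eventuallyEq hG).deriv, one_mul]
end
end

section
/- With A(x)(z) = z(1−z)/(z−x), the vector field Â(x)(z) := lim_{y→x} (x−y)^{-1}[A(x),A(y)](z) equals (1−z)²z²/(x−z)⁴, and it satisfies the identity Â(x) = −∂_x A(x) + (1/2)(1−2x)·∂_x² A(x) + (1/6)(x−x²)·∂_x³ A(x). -/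
open Complex Filter Set Topology

noncomputable section

/-- The Lie bracket of holomorphic vector fields: `[u,v] z = u z · v' z - v z · u' z`. -/
def lieBracket (u v : ℂ → ℂ) (z : ℂ) : ℂ := u z * deriv v z - v z * deriv u z

/-- The vector field `A(x)(z) = z (1 - z) / (z - x)`. -/
def Avf (x : ℂ) : ℂ → ℂ := fun z => z * (1 - z) / (z - x)

lemma hd1 (c z t : ℂ) (ht : t ≠ z) :
    HasDerivAt (fun s => c / (z - s)) (c / (z - t) ^ 2) t := by
  have hden : HasDerivAt (fun s : ℂ => z - s) (-1) t := (hasDerivAt_id t).const_sub z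
  have hz : z - t ≠ 0 := sub_ne_zero.mpr (Ne.symm ht)
  have h := (hasDerivAt_const t c).fun_div hden hz
  refine h.congr_deriv ?_
  field_simp
  ring

lemma hd2 (c z t : ℂ) (ht : t ≠ z) :
    HasDerivAt (fun s => c / (z - s) ^ 2) (2 * c / (z - t) ^ 3) t := by
  have hden0 : HasDerivAt (fun s : ℂ => z - s) (-1) t := (hasDerivAt_id t).const_sub z
  have hden : HasDerivAt (fun s : ℂ => (z - s) ^ 2) (2 * (z - t) ^ 1 * (-1)) t := by
    simpa using hden0.fun_pow 2
  have hz : z - t ≠ 0 := sub_ne_zero.mpr (Ne.symm ht)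
  have h := (hasDerivAt_const t c).fun_div hden (pow_ne_zero 2 hz)
  refine h.congr_deriv ?_
  field_simp
  ring

lemma hd3 (c z t : ℂ) (ht : t ≠ z) :
    HasDerivAt (fun s => 2 * c / (z - s) ^ 3) (6 * c / (z - t) ^ 4) t := by
  have hden0 : HasDerivAt (fun s : ℂ => z - s) (-1) t := (hasDerivAt_id t).const_sub z
  have hden : HasDerivAt (fun s : ℂ => (z - s) ^ 3) (3 * (z - t) ^ 2 * (-1)) t := by
    simpa using hden0.fun_pow 3
  have hz : z - t ≠ 0 := sub_ne_zero.mpr (Ne.symm ht)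
  have h := (hasDerivAt_const t (2 * c)).fun_div hden (pow_ne_zero 3 hz)
  refine h.congr_deriv ?_
  field_simp
  ring

lemma Avf_hasDerivAt (y z : ℂ) (hzy : z ≠ y) :
    HasDerivAt (Avf y)
      (((1 * (1 - z) + z * (-1)) * (z - y) - z * (1 - z) * 1) / (z - y) ^ 2) z := by
  have hnum : HasDerivAt (fun w : ℂ => w * (1 - w)) (1 * (1 - z) + z * (-1)) z :=
    (hasDerivAt_id z).mul ((hasDerivAt_id z).const_sub 1)
  have hden : HasDerivAt (fun w : ℂ => w - y) 1 z := (hasDerivAt_id z).sub_const y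
  exact hnum.div hden (sub_ne_zero.mpr hzy)

/-- `Â(x)(z) := lim_{y→x} (x-y)⁻¹ [A(x),A(y)](z)` equals
`(1-z)² z² / (x-z)⁴`, and `Â(x) = -∂ₓA(x) + (1/2)(1-2x) ∂ₓ²A(x) + (1/6)(x-x²) ∂ₓ³A(x)`. -/
theorem Avf_hat (x z : ℂ) (hx : z ≠ x) :
    Tendsto (fun y => (x - y)⁻¹ * lieBracket (Avf x) (Avf y) z) (𝓝[≠] x)
        (𝓝 ((1 - z) ^ 2 * z ^ 2 / (x - z) ^ 4)) ∧
    (1 - z) ^ 2 * z ^ 2 / (x - z) ^ 4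
      = -(deriv (fun t => Avf t z) x)
        + (1 / 2) * (1 - 2 * x) * iteratedDeriv 2 (fun t => Avf t z) x
        + (1 / 6) * (x - x ^ 2) * iteratedDeriv 3 (fun t => Avf t z) x := by
  have hxz : x ≠ z := hx.symm
  have hzx : z - x ≠ 0 := sub_ne_zero.mpr hx
  constructor
  · -- the limit
    have hEE : (fun y => (x - y)⁻¹ * lieBracket (Avf x) (Avf y) z)
        =ᶠ[𝓝[≠] x] fun y => (z * (1 - z)) ^ 2 / ((z - x) ^ 2 * (z - y) ^ 2) := by
      have h1 : ∀ᶠ y in 𝓝[≠] x, y ≠ x := self_mem_nhdsWithin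
      have h2 : ∀ᶠ y in 𝓝[≠] x, y ≠ z :=
        eventually_nhdsWithin_of_eventually_nhds (isOpen_ne.mem_nhds hxz)
      filter_upwards [h1, h2] with y hyx hyz
      have hzy : z - y ≠ 0 := sub_ne_zero.mpr (Ne.symm hyz)
      have hxy : x - y ≠ 0 := sub_ne_zero.mpr (Ne.symm hyx)
      have dAy := (Avf_hasDerivAt y z (Ne.symm hyz)).deriv
      have dAx := (Avf_hasDerivAt x z hx).deriv
      show (x - y)⁻¹ * lieBracket (Avf x) (Avf y) z
          = (z * (1 - z)) ^ 2 / ((z - x) ^ 2 * (z - y) ^ 2)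
      rw [lieBracket, dAy, dAx]
      have hAx : Avf x z = z * (1 - z) / (z - x) := rfl
      have hAy : Avf y z = z * (1 - z) / (z - y) := rfl
      rw [hAx, hAy]
      have key : z * (1 - z) / (z - x) *
            (((1 * (1 - z) + z * -1) * (z - y) - z * (1 - z) * 1) / (z - y) ^ 2)
          - z * (1 - z) / (z - y) *
            (((1 * (1 - z) + z * -1) * (z - x) - z * (1 - z) * 1) / (z - x) ^ 2)
          = (x - y) * ((z * (1 - z)) ^ 2 / ((z - x) ^ 2 * (z - y) ^ 2)) := by
        field_simp
        ring
      rw [key, inv_mul_cancel_left₀ hxy]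
    have hT : Tendsto (fun y => (z * (1 - z)) ^ 2 / ((z - x) ^ 2 * (z - y) ^ 2)) (𝓝[≠] x)
        (𝓝 ((z * (1 - z)) ^ 2 / ((z - x) ^ 2 * (z - x) ^ 2))) := by
      apply Tendsto.mono_left _ nhdsWithin_le_nhds
      apply ContinuousAt.tendsto
      apply ContinuousAt.div continuousAt_const
      · fun_prop
      · exact mul_ne_zero (pow_ne_zero 2 hzx) (pow_ne_zero 2 hzx)
    have hval : (z * (1 - z)) ^ 2 / ((z - x) ^ 2 * (z - x) ^ 2)
        = (1 - z) ^ 2 * z ^ 2 / (x - z) ^ 4 := by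
      have h4 : (z - x) ^ 2 * (z - x) ^ 2 = (x - z) ^ 4 := by ring
      rw [h4]
      ring_nf
    exact Tendsto.congr' hEE.symm (hval ▸ hT)
  · -- the derivative identity
    have hf : (fun t => Avf t z) = fun t => z * (1 - z) / (z - t) := by
      funext t; rfl
    have hmem : {t : ℂ | t ≠ z} ∈ 𝓝 x := isOpen_ne.mem_nhds hxz
    have E1 : ∀ t : ℂ, t ≠ z →
        deriv (fun t => Avf t z) =ᶠ[𝓝 t] fun s => z * (1 - z) / (z - s) ^ 2 := by
      intro t ht
      filter_upwards [isOpen_ne.mem_nhds ht] with s hs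
      rw [hf]
      exact (hd1 (z * (1 - z)) z s hs).deriv
    have D1 : deriv (fun t => Avf t z) x = z * (1 - z) / (z - x) ^ 2 := by
      rw [hf]; exact (hd1 (z * (1 - z)) z x hxz).deriv
    have D2 : iteratedDeriv 2 (fun t => Avf t z) x = 2 * (z * (1 - z)) / (z - x) ^ 3 := by
      rw [show (2 : ℕ) = 1 + 1 from rfl, iteratedDeriv_succ, iteratedDeriv_one,
        (E1 x hxz).deriv_eq]
      exact (hd2 (z * (1 - z)) z x hxz).deriv
    have E2 : iteratedDeriv 2 (fun t => Avf t z)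
        =ᶠ[𝓝 x] fun t => 2 * (z * (1 - z)) / (z - t) ^ 3 := by
      filter_upwards [hmem] with t ht
      rw [show (2 : ℕ) = 1 + 1 from rfl, iteratedDeriv_succ, iteratedDeriv_one,
        (E1 t ht).deriv_eq]
      exact (hd2 (z * (1 - z)) z t ht).deriv
    have D3 : iteratedDeriv 3 (fun t => Avf t z) x = 6 * (z * (1 - z)) / (z - x) ^ 4 := by
      rw [show (3 : ℕ) = 2 + 1 from rfl, iteratedDeriv_succ, E2.deriv_eq]
      exact (hd3 (z * (1 - z)) z x hxz).deriv
    rw [D1, D2, D3]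
    have h4 : (x - z) ^ 4 = (z - x) ^ 4 := by ring
    rw [h4]
    have hi : (z - x)⁻¹ * (z - x) = 1 := inv_mul_cancel₀ hzx
    simp only [div_eq_mul_inv, ← inv_pow]
    linear_combination (z * (1 - z)) * ((z - x)⁻¹) ^ 2 *
      ((1 - 2 * x) * (z - x)⁻¹ - (z - x) * (z - x)⁻¹ - 1) * hi
end
end

section
/- Every three-times differentiable solution h : (1,∞) → ℝ of the ODE −h'(x) + (1/2)(1−2x)·h''(x) + (1/6)(x−x²)·h'''(x) = 0 has the form h(x) = (c₀ + c₁x + c₂x²)/(x(1−x)) for constants c₀, c₁, c₂; equivalently h(x) = a₀(x−1)/x + a₁ + a₂·x/(x−1). -/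
/-!
The equation is exact: its left-hand side is `1/6` times the third derivative of `(x - x²) h(x)`.
So `(x - x²) h(x)` has vanishing third derivative on the interval,
hence is a quadratic polynomial `c₀ + c₁ x + c₂ x²` there; dividing by `x (1 - x)` and splitting
into partial fractions gives both forms.
-/

open Set

theorem exists_eq_add_of_hasDerivAt_eq {s : Set ℝ} (hs : IsOpen s) (hs' : IsPreconnected s)
    {f g φ : ℝ → ℝ} (hf : ∀ x ∈ s, HasDerivAt f (φ x) x) (hg : ∀ x ∈ s, HasDerivAt g (φ x) x) :
    ∃ a, ∀ x ∈ s, f x = g x + a :=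
  hs.exists_eq_add_of_deriv_eq hs' (fun x hx => (hf x hx).differentiableAt.differentiableWithinAt)
    (fun x hx => (hg x hx).differentiableAt.differentiableWithinAt)
    (fun x hx => (hf x hx).deriv.trans (hg x hx).deriv.symm)

theorem exists_eq_quadratic_of_hasDerivAt {s : Set ℝ} (hs : IsOpen s) (hs' : IsPreconnected s)
    {f f₁ f₂ : ℝ → ℝ} (h₀ : ∀ x ∈ s, HasDerivAt f (f₁ x) x)
    (h₁ : ∀ x ∈ s, HasDerivAt f₁ (f₂ x) x) (h₂ : ∀ x ∈ s, HasDerivAt f₂ 0 x) :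
    ∃ a b c : ℝ, ∀ x ∈ s, f x = a * x ^ 2 + b * x + c := by
  obtain ⟨a, ha⟩ := exists_eq_add_of_hasDerivAt_eq hs hs' h₂ fun x _ => hasDerivAt_const x 0
  obtain ⟨b, hb⟩ := exists_eq_add_of_hasDerivAt_eq hs hs' h₁ fun x hx => by
    simpa [ha x hx] using (hasDerivAt_id x).const_mul a
  obtain ⟨c, hc⟩ := exists_eq_add_of_hasDerivAt_eq hs hs' h₀ fun x hx => by
    rw [hb x hx]
    exact (((hasDerivAt_pow 2 x).const_mul (a / 2)).add ((hasDerivAt_id x).const_mul b)).congr_deriv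
      (by simp only [Nat.cast_ofNat, Nat.add_one_sub_one, pow_one, mul_one, add_left_inj]; ring)
  exact ⟨a / 2, b, c, hc⟩

section WeightedDerivatives

variable {h : ℝ → ℝ} {x : ℝ}

theorem hasDerivAt_sub_sq_mul (h₀ : DifferentiableAt ℝ h x) :
    HasDerivAt (fun y => (y - y ^ 2) * h y) ((1 - 2 * x) * h x + (x - x ^ 2) * deriv h x) x :=
  (((hasDerivAt_id x).sub (hasDerivAt_pow 2 x)).mul h₀.hasDerivAt).congr_deriv (by simp)

theorem hasDerivAt_sub_sq_mul_deriv (h₀ : DifferentiableAt ℝ h x)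
    (h₁ : DifferentiableAt ℝ (deriv h) x) :
    HasDerivAt (fun y => (1 - 2 * y) * h y + (y - y ^ 2) * deriv h y)
      (-2 * h x + 2 * (1 - 2 * x) * deriv h x + (x - x ^ 2) * deriv (deriv h) x) x := by
  have := (((hasDerivAt_id x).const_mul 2).const_sub 1).mul h₀.hasDerivAt |>.add
    (((hasDerivAt_id x).sub (hasDerivAt_pow 2 x)).mul h₁.hasDerivAt)
  refine this.congr_deriv ?_
  simp only [mul_one, id_eq, Nat.cast_ofNat, Nat.add_one_sub_one, pow_one, Pi.sub_apply]
  ring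

theorem hasDerivAt_sub_sq_mul_deriv_deriv (h₀ : DifferentiableAt ℝ h x)
    (h₁ : DifferentiableAt ℝ (deriv h) x) (h₂ : DifferentiableAt ℝ (deriv (deriv h)) x) :
    HasDerivAt
      (fun y => -2 * h y + 2 * (1 - 2 * y) * deriv h y + (y - y ^ 2) * deriv (deriv h) y)
      (-6 * deriv h x + 3 * (1 - 2 * x) * deriv (deriv h) x
        + (x - x ^ 2) * deriv (deriv (deriv h)) x) x := by
  have := ((h₀.hasDerivAt.const_mul (-2)).add
    ((((hasDerivAt_id x).const_mul 2).const_sub 1).const_mul 2 |>.mul h₁.hasDerivAt)).add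
    (((hasDerivAt_id x).sub (hasDerivAt_pow 2 x)).mul h₂.hasDerivAt)
  refine this.congr_deriv ?_
  simp only [mul_one, id_eq, Nat.cast_ofNat, Nat.add_one_sub_one, pow_one, Pi.sub_apply]
  ring

end WeightedDerivatives

theorem quadratic_div_eq_partial_fractions {x : ℝ} (hx₀ : x ≠ 0) (hx₁ : x ≠ 1) (c₀ c₁ c₂ : ℝ) :
    (c₀ + c₁ * x + c₂ * x ^ 2) / (x * (1 - x)) =
      -c₀ * ((x - 1) / x) + (2 * c₀ + c₁) + -(c₀ + c₁ + c₂) * (x / (x - 1)) := by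
  have : 1 - x ≠ 0 := sub_ne_zero.mpr hx₁.symm
  have : x - 1 ≠ 0 := sub_ne_zero.mpr hx₁
  field_simp
  ring

/-- every three-times differentiable solution `h : (1,∞) → ℝ` of
`-h' + (1/2)(1-2x) h'' + (1/6)(x-x²) h''' = 0` has the form
`h x = (c₀ + c₁ x + c₂ x²)/(x(1-x))`, equivalently
`h x = a₀ (x-1)/x + a₁ + a₂ x/(x-1)`. -/
theorem ode_solution_form (h : ℝ → ℝ)
    (hd1 : ∀ x ∈ Ioi (1 : ℝ), DifferentiableAt ℝ h x)
    (hd2 : ∀ x ∈ Ioi (1 : ℝ), DifferentiableAt ℝ (deriv h) x)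
    (hd3 : ∀ x ∈ Ioi (1 : ℝ), DifferentiableAt ℝ (deriv (deriv h)) x)
    (hode : ∀ x ∈ Ioi (1 : ℝ),
      -(deriv h x) + (1 / 2) * (1 - 2 * x) * deriv (deriv h) x
        + (1 / 6) * (x - x ^ 2) * deriv (deriv (deriv h)) x = 0) :
    (∃ c₀ c₁ c₂ : ℝ, ∀ x ∈ Ioi (1 : ℝ),
      h x = (c₀ + c₁ * x + c₂ * x ^ 2) / (x * (1 - x))) ∧
    (∃ a₀ a₁ a₂ : ℝ, ∀ x ∈ Ioi (1 : ℝ),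
      h x = a₀ * ((x - 1) / x) + a₁ + a₂ * (x / (x - 1))) := by
  obtain ⟨c₂, c₁, c₀, hquad⟩ := exists_eq_quadratic_of_hasDerivAt isOpen_Ioi isPreconnected_Ioi
    (fun x hx => hasDerivAt_sub_sq_mul (hd1 x hx))
    (fun x hx => hasDerivAt_sub_sq_mul_deriv (hd1 x hx) (hd2 x hx))
    (fun x hx => (hasDerivAt_sub_sq_mul_deriv_deriv (hd1 x hx) (hd2 x hx) (hd3 x hx)).congr_deriv
      (by linear_combination 6 * hode x hx))
  have hsol : ∀ x ∈ Ioi (1 : ℝ), h x = (c₀ + c₁ * x + c₂ * x ^ 2) / (x * (1 - x)) := by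
    intro x (hx : 1 < x)
    rw [eq_div_iff (mul_ne_zero (by positivity) (by linarith))]
    linear_combination hquad x hx
  refine ⟨⟨c₀, c₁, c₂, hsol⟩, -c₀, 2 * c₀ + c₁, -(c₀ + c₁ + c₂), fun x hx => ?_⟩
  rw [hsol x hx, quadratic_div_eq_partial_fractions (zero_lt_one.trans hx).ne' hx.ne']
end
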